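/- arXiv:math/0202141 — 2 statements merged into one kernel-verified Lean document; each statement's English description precedes it below -/
import Mathlib

section
/- For every ε > 0 and every x > 0, the limit as n → ∞ of f_{ε,n}(x) := ∑_{a=1}^n (μ(a)/a^ε)·ρ(1/(a x)) exists and equals f_ε(x) := 1/(x·ζ(1+ε)) − ∑_{a ≤ 1/x} (μ(a)/a^ε)·⌊1/(a x)⌋. -/
/-!
Since `ρ(y) = y - ⌊y⌋`, the sum `f_{ε,n}(x)` splits as `1/x` times the `n`-th partial sum of
`∑ μ(a)/a^(1+ε) = 1/ζ(1+ε)`, minus `∑_{a ≤ n} μ(a)/a^ε ⌊1/(a x)⌋`. The terms of the latter vanish for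
`a > 1/x`, so it is constant once `n ≥ 1/x`.
-/

open ArithmeticFunction Filter

theorem tendsto_sum_Icc_moebius_div_cpow {s : ℂ} (hs : 1 < s.re) :
    Tendsto (fun n : ℕ => ∑ a ∈ Finset.Icc 1 n, (moebius a : ℂ) / (a : ℂ) ^ s) atTop
      (nhds (riemannZeta s)⁻¹) := by
  have hLSeries : LSeries (fun n => (moebius n : ℂ)) s = (riemannZeta s)⁻¹ := by
    rw [← LSeries_zeta_eq_riemannZeta hs]
    exact eq_inv_of_mul_eq_one_right (LSeries_zeta_mul_Lseries_moebius hs)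
  have hpartial := (LSeriesSummable_moebius_iff.mpr hs).LSeriesHasSum.tendsto_sum_nat
  rw [hLSeries] at hpartial
  refine (hpartial.comp (tendsto_add_atTop_nat 1)).congr fun n => ?_
  rw [Function.comp_apply, Finset.range_eq_Ico, Finset.sum_eq_sum_Ico_succ_bot n.succ_pos,
    LSeries.term_zero, zero_add]
  refine Finset.sum_congr rfl fun a ha => LSeries.term_of_ne_zero ?_ _ _
  exact Nat.one_le_iff_ne_zero.mp (Finset.mem_Ico.mp ha).1

theorem floor_one_div_mul_eq_zero {x : ℝ} (hx : 0 < x) {a : ℕ} (ha : ⌊1 / x⌋₊ < a) :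
    ⌊1 / (a * x)⌋ = 0 := by
  have hax : 1 < a * x := by
    rw [← div_lt_iff₀ hx]
    exact (Nat.floor_lt (by positivity)).mp ha
  rw [Int.floor_eq_zero_iff, one_div]
  exact ⟨by positivity, inv_lt_one_of_one_lt₀ hax⟩

theorem sum_mul_fract_one_div_mul_eq {x : ℝ} (hx : 0 < x) (c : ℕ → ℂ) {n : ℕ} (hn : ⌊1 / x⌋₊ ≤ n) :
    ∑ a ∈ Finset.Icc 1 n, c a * (Int.fract (1 / ((a : ℝ) * x)) : ℝ) =
      (x : ℂ)⁻¹ * ∑ a ∈ Finset.Icc 1 n, c a / a -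
        ∑ a ∈ Finset.Icc 1 ⌊1 / x⌋₊, c a * (⌊1 / ((a : ℝ) * x)⌋ : ℤ) := by
  have htail : ∑ a ∈ Finset.Icc 1 ⌊1 / x⌋₊, c a * (⌊1 / ((a : ℝ) * x)⌋ : ℤ) =
      ∑ a ∈ Finset.Icc 1 n, c a * (⌊1 / ((a : ℝ) * x)⌋ : ℤ) := by
    refine Finset.sum_subset (Finset.Icc_subset_Icc_right hn) fun a ha ha' => ?_
    have ha : ⌊1 / x⌋₊ < a := by simp only [Finset.mem_Icc] at ha ha'; omega
    rw [floor_one_div_mul_eq_zero hx ha, Int.cast_zero, mul_zero]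
  rw [htail, Finset.mul_sum, ← Finset.sum_sub_distrib]
  refine Finset.sum_congr rfl fun a _ => ?_
  rw [Int.fract]
  push_cast
  ring

theorem f_eps_pointwise_limit (ε : ℝ) (hε : 0 < ε) (x : ℝ) (hx : 0 < x) :
    Tendsto
      (fun n : ℕ => ∑ a ∈ Finset.Icc 1 n,
        ((moebius a : ℂ) / (a:ℂ)^(ε:ℂ)) * (Int.fract (1/((a:ℝ)*x)) : ℝ))
      atTop
      (nhds (1 / ((x:ℂ) * riemannZeta (1+ε)) -
        ∑ a ∈ Finset.Icc 1 ⌊1/x⌋₊,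
          ((moebius a : ℂ) / (a:ℂ)^(ε:ℂ)) * (⌊1/((a:ℝ)*x)⌋ : ℤ))) := by
  have hs : 1 < (1 + ε : ℂ).re := by simpa using hε
  rw [one_div, mul_inv]
  refine (((tendsto_sum_Icc_moebius_div_cpow hs).const_mul (x : ℂ)⁻¹).sub_const _).congr' ?_
  filter_upwards [eventually_ge_atTop ⌊1 / x⌋₊] with n hn
  rw [sum_mul_fract_one_div_mul_eq hx _ hn]
  congr 2
  refine Finset.sum_congr rfl fun a ha => ?_
  have ha : (a : ℂ) ≠ 0 := by simp only [Finset.mem_Icc] at ha; exact_mod_cast (by omega : a ≠ 0)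
  rw [Complex.cpow_add _ _ ha, Complex.cpow_one, div_div, mul_comm]
end

section
/- For every x > 0, lim_{ε → 0⁺} f_ε(x) = −χ(x), where f_ε(x) := 1/(x·ζ(1+ε)) − ∑_{a ≤ 1/x} (μ(a)/a^ε)·⌊1/(a x)⌋ and χ is the characteristic function of the interval (0,1]. -/
/-!
Since `1/ζ` vanishes at the pole `s = 1`, the first term tends to `0`. The sum is a finite
Dirichlet polynomial, continuous at `ε = 0`, where, with `N = ⌊1/x⌋`, it equals
`∑_{a ≤ N} μ(a) ⌊N/a⌋ = ∑_{n ≤ N} (μ * 1)(n)`, which is `1` if `N ≥ 1` (i.e. `x ≤ 1`) and `0`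
otherwise.
-/

open ArithmeticFunction Filter Topology
open scoped ArithmeticFunction.Moebius

theorem sum_Icc_moebius_mul_div (N : ℕ) :
    ∑ n ∈ Finset.Icc 1 N, (μ n : ℤ) * (N / n : ℕ) = if N = 0 then 0 else 1 := by
  rw [show Finset.Icc 1 N = Finset.Ioc 0 N from Finset.Icc_add_one_left_eq_Ioc 0 N,
    ← sum_Ioc_mul_zeta_eq_sum, moebius_mul_coe_zeta]
  rcases N.eq_zero_or_pos with rfl | hN
  · simp
  · rw [Finset.sum_eq_single_of_mem 1 (by simpa [Nat.one_le_iff_ne_zero] using hN.ne')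
      fun n _ hn => one_apply_ne hn]
    simp [hN.ne']

theorem Int.floor_one_div_natCast_mul {x : ℝ} (hx : 0 ≤ x) (n : ℕ) :
    ⌊1 / (n * x)⌋ = ((⌊1 / x⌋₊ / n : ℕ) : ℤ) := by
  rw [div_mul_eq_div_div_swap, ← Nat.floor_div_natCast,
    Int.natCast_floor_eq_floor (by positivity)]

theorem sum_moebius_mul_floor_one_div_mul {x : ℝ} (hx : 0 < x) :
    ∑ a ∈ Finset.Icc 1 ⌊1 / x⌋₊, (μ a : ℤ) * ⌊1 / (a * x)⌋ = if x ≤ 1 then 1 else 0 := by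
  simp_rw [Int.floor_one_div_natCast_mul hx.le]
  simp only [sum_Icc_moebius_mul_div, Nat.floor_eq_zero, div_lt_one hx, ← not_le, ite_not]

theorem tendsto_inv_riemannZeta_nhdsNE_one :
    Tendsto (fun s => (riemannZeta s)⁻¹) (𝓝[≠] 1) (𝓝 0) := by
  have hsub : Tendsto (fun s : ℂ => s - 1) (𝓝[≠] 1) (𝓝 0) :=
    tendsto_sub_nhds_zero_iff.mpr nhdsWithin_le_nhds
  have h := hsub.mul (riemannZeta_residue_one.inv₀ one_ne_zero)
  rw [zero_mul] at h
  refine h.congr' ?_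
  filter_upwards [self_mem_nhdsWithin] with s hs
  rw [mul_inv, ← mul_assoc, mul_inv_cancel₀ (sub_ne_zero.mpr hs), one_mul]

theorem tendsto_one_add_ofReal_nhdsGT_zero :
    Tendsto (fun ε : ℝ => 1 + (ε : ℂ)) (𝓝[>] 0) (𝓝[≠] 1) := by
  have h := (Complex.continuous_ofReal.const_add 1).continuousWithinAt.tendsto_nhdsWithin
    (x := 0) (s := Set.Ioi 0) (t := {1}ᶜ) fun ε (hε : 0 < ε) => by simpa using hε.ne'
  simpa using h

theorem tendsto_cpow_ofReal_nhds_zero {z : ℂ} (hz : z ≠ 0) :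
    Tendsto (fun ε : ℝ => z ^ (ε : ℂ)) (𝓝 0) (𝓝 1) := by
  simpa [Function.comp_def] using
    (continuousAt_const_cpow hz).tendsto.comp (Complex.continuous_ofReal.tendsto 0)

theorem f_eps_tendsto_neg_chi (x : ℝ) (hx : 0 < x) :
    Tendsto
      (fun ε : ℝ => 1 / ((x:ℂ) * riemannZeta (1+ε)) -
        ∑ a ∈ Finset.Icc 1 ⌊1/x⌋₊,
          ((moebius a : ℂ) / (a:ℂ)^(ε:ℂ)) * (⌊1/((a:ℝ)*x)⌋ : ℤ))
      (nhdsWithin 0 (Set.Ioi 0))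
      (nhds (- if x ≤ 1 then 1 else 0)) := by
  have hzeta : Tendsto (fun ε : ℝ => 1 / ((x : ℂ) * riemannZeta (1 + ε))) (𝓝[>] 0) (𝓝 0) := by
    simpa [Function.comp_def, mul_inv] using
      (tendsto_inv_riemannZeta_nhdsNE_one.comp tendsto_one_add_ofReal_nhdsGT_zero).mul_const
        (x : ℂ)⁻¹
  have hsum : Tendsto (fun ε : ℝ => ∑ a ∈ Finset.Icc 1 ⌊1 / x⌋₊,
      ((μ a : ℂ) / (a : ℂ) ^ (ε : ℂ)) * (⌊1 / ((a : ℝ) * x)⌋ : ℤ))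
      (𝓝[>] 0) (𝓝 (if x ≤ 1 then 1 else 0)) := by
    have hchi := congr_arg ((↑) : ℤ → ℂ) (sum_moebius_mul_floor_one_div_mul hx)
    push_cast at hchi
    rw [← hchi]
    refine (tendsto_finsetSum _ fun a ha => ?_).mono_left nhdsWithin_le_nhds
    have ha0 : (a : ℂ) ≠ 0 :=
      Nat.cast_ne_zero.mpr (Nat.one_le_iff_ne_zero.mp (Finset.mem_Icc.mp ha).1)
    simpa using (tendsto_const_nhds.div (tendsto_cpow_ofReal_nhds_zero ha0) one_ne_zero).mul_const
      ((⌊1 / ((a : ℝ) * x)⌋ : ℤ) : ℂ)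
  simpa using hzeta.sub hsum
end
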